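/- Let n ≥ 4 be even, q = 2^n, α ∈ 𝔽_q^*, and let ω be a fixed element of 𝔽_4 \ 𝔽_2 regarded as an element of 𝔽_q. Then an element x ∈ 𝔽_q satisfies ∇_{F_{0,α}}(a,x) = 2 for all a ∈ 𝔽_q^* if and only if x ∉ {0, α, αω, αω²} and Tr(α/(x+α)) = 1. Equivalently, C-Spec_q(F_{0,α}) = {x ∈ 𝔽_q \ {0, α, αω, αω²} : Tr(α/(x+α)) = 1}. -/

import Mathlib

/-!
A point `x` is `x`-pAPN for `G` exactly when it lies on no vanishing flat `{x, u, v, x + u + v}`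
of `G`, i.e. one with `G x + G u + G v + G (x + u + v) = 0`. Outside `{0, α}` the function
`F_{0,α}` is the inverse function, and four distinct nonzero points with nonzero sum never form
a vanishing flat of the inverse, since `p⁻¹ + q⁻¹ + r⁻¹ + (p + q + r)⁻¹` has numerator
`(p + q)(q + r)(r + p)`. So a vanishing flat of `F_{0,α}` through `x ∉ {0, α}` contains `0` or `α`.
If it contains both, it is `{0, α, x, x + α}`, which vanishes exactly for `x ∈ {αω, αω²}`; this
also makes `{0, α, αω, αω²}` a vanishing flat. If it contains only `0`, it is
`{0, x, tx, (t + 1)x}` with `t² + t = α / (x + α)`, and every such `t` gives one. If it contains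
only `α`, then `ω² + ω = 1` again produces a root of `t² + t = α / (x + α)`.
Finally `t² + t = c` is solvable exactly when `Tr c = 0`: the map `t ↦ t² + t` is two-to-one into
the kernel of the trace, which has at most `2^(n-1)` elements as the roots of a polynomial.
-/

namespace APNPaper

open Finset

variable {F : Type*} [Field F] [Fintype F] [DecidableEq F]

/-- `δ_G(a,b)`: the number of `x` with `D_aG(x) = G(x) + G(x+a) = b`. -/
def delta (G : F → F) (a b : F) : ℕ :=
  (Finset.univ.filter fun x : F => G x + G (x + a) = b).card

/-- `∇_G(a,x) = δ_G(a, D_aG(x))`. -/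
def nabla (G : F → F) (a x : F) : ℕ := delta G a (G x + G (x + a))

/-- `G` is almost perfect nonlinear. -/
def IsAPN (G : F → F) : Prop := ∀ a : F, a ≠ 0 → ∀ b : F, delta G a b ≤ 2

/-- The derivative `D_aG` is 2-to-1, i.e. `G` satisfies property `(p_a)`. -/
def TwoToOne (G : F → F) (a : F) : Prop :=
  ∀ b : F, delta G a b = 0 ∨ delta G a b = 2

instance instDecTwoToOne (G : F → F) (a : F) : Decidable (TwoToOne G a) := by
  unfold TwoToOne; infer_instance

/-- The row spectrum `R-Spec_q(G)`. -/
def RSpec (G : F → F) : Finset F :=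
  (Finset.univ.erase (0 : F)).filter fun a => TwoToOne G a

/-- `S_a = {x : ∇_G(a,x) = 2}`. -/
def Sset (G : F → F) (a : F) : Finset F :=
  Finset.univ.filter fun x : F => nabla G a x = 2

/-- `w_{S_a^c} = Σ_{b : δ_G(a,b) > 2} (δ_G(a,b)/2)²`. -/
def wS (G : F → F) (a : F) : ℤ :=
  ∑ b : F, if 2 < delta G a b then ((delta G a b / 2 : ℕ) : ℤ) ^ 2 else 0

/-- `χ_a = 1` if `S_a = 𝔽_q`, and `0` otherwise. -/
def chi (G : F → F) (a : F) : ℤ :=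
  if Sset G a = Finset.univ then 1 else 0

/-- `𝒟(G) = Σ_{a ≠ 0} (|S_a| − w_{S_a^c} + χ_a)`. -/
def Dscr (G : F → F) : ℤ :=
  ∑ a ∈ Finset.univ.erase (0 : F), (((Sset G a).card : ℤ) - wS G a + chi G a)

/-- The APN-defect `APN-def(G) = q² − 1 − 𝒟(G)`. -/
def APNdef (G : F → F) : ℤ := (Fintype.card F : ℤ) ^ 2 - 1 - Dscr G

/-- The differential uniformity `δ_G`. -/
def diffUnif (G : F → F) : ℕ :=
  ((Finset.univ.erase (0 : F)) ×ˢ Finset.univ).sup fun p => delta G p.1 p.2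

/-- The set of vanishing flats of `G`. -/
def VF (G : F → F) : Set (Finset F) :=
  {S | ∃ x y z : F, x ≠ y ∧ x ≠ z ∧ y ≠ z ∧
    G x + G y + G z + G (x + y + z) = 0 ∧ S = ({x, y, z, x + y + z} : Finset F)}

/-- The absolute trace `Tr(z) = z + z² + ⋯ + z^{2^{n-1}}` (with values in `{0,1} ⊆ F`). -/
def Tr (n : ℕ) (z : F) : F := ∑ i ∈ Finset.range n, z ^ (2 ^ i)

/-- The modification `F_{0,α}` of the inverse function: the values of the inverse
function at `0` and `α` are swapped. -/
def Fmod (α : F) : F → F :=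
  fun x => if x = 0 then α⁻¹ else if x = α then 0 else x⁻¹

end APNPaper

namespace APNPaper

open Finset

section Trace

variable {F : Type*} [Field F] {n : ℕ}

theorem Tr_sq_eq_sum (z : F) : Tr n (z ^ 2) = ∑ i ∈ range n, z ^ 2 ^ (i + 1) :=
  sum_congr rfl fun i _ => by rw [← pow_mul, pow_succ']

theorem Tr_sq [Fintype F] (hcard : Fintype.card F = 2 ^ n) (z : F) : Tr n (z ^ 2) = Tr n z := by
  have hfrob : z ^ 2 ^ n = z := hcard ▸ FiniteField.pow_card z
  have h := (sum_range_succ' (fun i => z ^ 2 ^ i) n).symm.trans (sum_range_succ _ n)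
  simp only [pow_zero, pow_one, hfrob] at h
  rw [Tr_sq_eq_sum, Tr, add_right_cancel h]

theorem card_filter_Tr_eq_zero_le [Fintype F] [DecidableEq F] (hn : n ≠ 0) :
    #{z : F | Tr n z = 0} ≤ 2 ^ (n - 1) := by
  open Polynomial in
  let P : F[X] := ∑ i ∈ range n, X ^ 2 ^ i
  have hP : P ≠ 0 := by
    intro h
    have := congrArg (coeff · 1) h
    simp [P, finsetSum_coeff, coeff_X_pow, eq_comm (a := 1), hn] at this
  calc #{z : F | Tr n z = 0} ≤ P.natDegree := by
        refine card_le_degree_of_subset_roots fun z hz => ?_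
        simp only [mem_val, mem_filter, mem_univ, true_and] at hz
        simpa [mem_roots hP, P, eval_finsetSum, Tr] using hz
    _ ≤ 2 ^ (n - 1) := by
        refine natDegree_sum_le_of_forall_le _ _ fun i hi => ?_
        rw [natDegree_X_pow]
        exact Nat.pow_le_pow_right two_pos (by grind)

variable [CharP F 2]

theorem Tr_add (a b : F) : Tr n (a + b) = Tr n a + Tr n b := by
  have : Fact (Nat.Prime 2) := ⟨Nat.prime_two⟩
  simp only [Tr, ← sum_add_distrib, add_pow_char_pow]

theorem Tr_sq_eq_sq_Tr (z : F) : Tr n (z ^ 2) = Tr n z ^ 2 := by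
  rw [Tr_sq_eq_sum, Tr, CharTwo.sum_sq]
  simp only [← pow_mul, ← pow_succ]

variable [Fintype F]

theorem Tr_sq_add_self (hcard : Fintype.card F = 2 ^ n) (t : F) : Tr n (t ^ 2 + t) = 0 := by
  rw [Tr_add, Tr_sq hcard, CharTwo.add_self_eq_zero]

theorem Tr_eq_zero_or_one (hcard : Fintype.card F = 2 ^ n) (z : F) :
    Tr n z = 0 ∨ Tr n z = 1 := by
  refine IsIdempotentElem.iff_eq_zero_or_one.mp ?_
  rw [IsIdempotentElem, ← sq, ← Tr_sq_eq_sq_Tr, Tr_sq hcard]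

theorem exists_sq_add_self_eq_iff_Tr_eq_zero [DecidableEq F] (hcard : Fintype.card F = 2 ^ n)
    (c : F) : (∃ t, t ^ 2 + t = c) ↔ Tr n c = 0 := by
  refine ⟨fun ⟨t, ht⟩ => ht ▸ Tr_sq_add_self hcard t, fun hc => ?_⟩
  have hn : n ≠ 0 := by
    rintro rfl
    exact (Fintype.one_lt_card (α := F)).ne' hcard
  let image : Finset F := univ.image fun t => t ^ 2 + t
  have hsub : image ⊆ ({z | Tr n z = 0} : Finset F) := by
    simp [image, subset_iff, Tr_sq_add_self hcard]
  have hfiber : ∀ b ∈ image, #{t | t ^ 2 + t = b} ≤ 2 := by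
    simp only [image, mem_image, mem_univ, true_and, forall_exists_index]
    rintro _ s rfl
    refine (card_le_card (t := {s, s + 1}) fun t ht => ?_).trans card_le_two
    have : (t + s) * (t + s + 1) = 0 := by
      linear_combination (mem_filter.mp ht).2 + (t * s + s ^ 2 + s) * CharTwo.two_eq_zero (R := F)
    rcases mul_eq_zero.mp this with h | h
    · simp [CharTwo.add_eq_zero.mp h]
    · simp [CharTwo.add_eq_zero.mp (add_assoc t s 1 ▸ h)]
  have hcount : 2 ^ n ≤ 2 * #image := hcard ▸ card_le_mul_card_image univ 2 hfiber
  have himage : image = ({z | Tr n z = 0} : Finset F) := by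
    refine eq_of_subset_of_card_le hsub ((card_filter_Tr_eq_zero_le hn).trans ?_)
    rw [← pow_sub_one_mul hn] at hcount
    omega
  have hc' : c ∈ image := himage ▸ mem_filter.mpr ⟨mem_univ c, hc⟩
  simpa [image] using hc'

end Trace

/-- `x` lies on one of the flats in `VF G`. -/
def HasVanishingFlatThrough {F : Type*} [Field F] (G : F → F) (x : F) : Prop :=
  ∃ u v, u ≠ x ∧ v ≠ x ∧ v ≠ u ∧ G x + G u + G v + G (x + u + v) = 0

section VanishingFlat

variable {F : Type*} [Field F] [Fintype F] [DecidableEq F] [CharP F 2]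

theorem nabla_eq_two_iff (G : F → F) {a : F} (ha : a ≠ 0) (x : F) :
    nabla G a x = 2 ↔ ∀ y, G y + G (y + a) = G x + G (x + a) → y = x ∨ y = x + a := by
  have hpair : {x, x + a} ⊆ ({y | G y + G (y + a) = G x + G (x + a)} : Finset F) := by
    simp [insert_subset_iff, CharTwo.add_cancel_right, add_comm (G x)]
  have hcard : #({x, x + a} : Finset F) = 2 := card_pair fun h => ha (by simpa using h)
  rw [nabla, delta]
  constructor
  · intro h y hy
    have heq := eq_of_subset_of_card_le hpair (h.trans hcard.symm).le
    have hy' : y ∈ ({x, x + a} : Finset F) := heq ▸ mem_filter.mpr ⟨mem_univ y, hy⟩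
    simpa using hy'
  · intro h
    rw [← hcard]
    refine congrArg card (Subset.antisymm (fun y hy => ?_) hpair)
    simpa using h y (mem_filter.mp hy).2

theorem forall_nabla_eq_two_iff (G : F → F) (x : F) :
    (∀ a, a ≠ 0 → nabla G a x = 2) ↔ ¬HasVanishingFlatThrough G x := by
  have h2 : (2 : F) = 0 := CharTwo.two_eq_zero
  constructor
  · rintro H ⟨u, v, hux, hvx, hvu, hG⟩
    have ha : x + u ≠ 0 := fun h => hux (CharTwo.add_eq_zero.mp h).symm
    have hv := (nabla_eq_two_iff G ha x).mp (H _ ha) v (by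
      rw [CharTwo.add_cancel_left, show v + (x + u) = x + u + v by ring]
      linear_combination hG - (G x + G u) * h2)
    rw [CharTwo.add_cancel_left] at hv
    exact hv.elim hvx hvu
  · intro hflat a ha
    refine (nabla_eq_two_iff G ha x).mpr fun y hy => ?_
    by_contra! hne
    refine hflat ⟨x + a, y, by simpa using ha, hne.1, hne.2, ?_⟩
    rw [CharTwo.add_cancel_left, add_comm a y]
    linear_combination hy + (G x + G (x + a)) * h2

end VanishingFlat

section InverseSums

variable {F : Type*} [Field F] [CharP F 2]

theorem inv_add_inv_add_inv_add_inv_ne_zero {p q r : F} (hp : p ≠ 0) (hq : q ≠ 0) (hr : r ≠ 0)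
    (hpq : p ≠ q) (hqr : q ≠ r) (hrp : r ≠ p) (hs : p + q + r ≠ 0) :
    p⁻¹ + q⁻¹ + r⁻¹ + (p + q + r)⁻¹ ≠ 0 := by
  intro h
  field_simp at h
  have : (p + q) * (q + r) * (r + p) = 0 := by
    linear_combination h - (p * q * r) * CharTwo.two_eq_zero (R := F)
  simp only [mul_eq_zero, CharTwo.add_eq_zero] at this
  tauto

variable {α ω x : F}

theorem inv_add_inv_add_inv_add_eq_zero_iff (hω : ω ^ 2 = ω + 1) (hα : α ≠ 0) (hx : x ≠ 0)
    (hxα : x ≠ α) : α⁻¹ + x⁻¹ + (x + α)⁻¹ = 0 ↔ x = α * ω ∨ x = α * ω ^ 2 := by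
  have h2 : (2 : F) = 0 := CharTwo.two_eq_zero
  have hxα' : x + α ≠ 0 := mt CharTwo.add_eq_zero.mp hxα
  have hfactor : α⁻¹ + x⁻¹ + (x + α)⁻¹ = (x + α * ω) * (x + α * ω ^ 2) / (α * x * (x + α)) := by
    field_simp
    linear_combination (-α ^ 2 * (ω + 1) - x * α) * hω + (x * α - x * α * ω - α ^ 2 * ω) * h2
  rw [hfactor, div_eq_zero_iff, or_iff_left (by simp [hα, hx, hxα']), mul_eq_zero,
    CharTwo.add_eq_zero, CharTwo.add_eq_zero]

theorem inv_add_inv_add_inv_add_inv_add_eq_zero_iff {u : F} (hα : α ≠ 0) (hx : x ≠ 0)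
    (hu : u ≠ 0) (hux : u ≠ x) (hxα : x ≠ α) :
    α⁻¹ + x⁻¹ + u⁻¹ + (x + u)⁻¹ = 0 ↔ (u / x) ^ 2 + u / x = α / (x + α) := by
  have h2 : (2 : F) = 0 := CharTwo.two_eq_zero
  have hxα' : x + α ≠ 0 := mt CharTwo.add_eq_zero.mp hxα
  have hxu : x + u ≠ 0 := fun h => hux (CharTwo.add_eq_zero.mp h).symm
  have hL : α⁻¹ + x⁻¹ + u⁻¹ + (x + u)⁻¹
      = (x * u * (x + u) + α * (x ^ 2 + x * u + u ^ 2)) / (α * x * u * (x + u)) := by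
    field_simp
    linear_combination x * α * u * h2
  have hR : (u / x) ^ 2 + u / x - α / (x + α)
      = (x * u * (x + u) + α * (x ^ 2 + x * u + u ^ 2)) / (x ^ 2 * (x + α)) := by
    field_simp
    linear_combination -x ^ 2 * α * h2
  rw [hL, ← sub_eq_zero (a := _ + _), hR]
  simp [hα, hx, hu, hxu, hxα']

theorem exists_sq_add_self_eq_of_inv_add_inv_add_inv_eq_zero {u v : F} (hω : ω ^ 2 = ω + 1)
    (hx : x ≠ 0) (hu : u ≠ 0) (hv : v ≠ 0) (hxα : x ≠ α) (hsum : x + u + v = α)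
    (h : x⁻¹ + u⁻¹ + v⁻¹ = 0) : ∃ t, t ^ 2 + t = α / (x + α) := by
  have h2 : (2 : F) = 0 := CharTwo.two_eq_zero
  have hxα' : x + α ≠ 0 := mt CharTwo.add_eq_zero.mp hxα
  have hs : x + α = u + v := by linear_combination x * h2 - hsum
  have ht : (u / (x + α)) ^ 2 + u / (x + α) = x / (x + α) := by
    field_simp at h ⊢
    rw [hs]
    linear_combination h + (u ^ 2 - u * x - v * x) * h2
  have hαx : α / (x + α) = x / (x + α) + 1 := by
    field_simp
    linear_combination -x * h2
  refine ⟨u / (x + α) + ω, ?_⟩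
  rw [hαx, ← ht]
  linear_combination hω + (u / (x + α) * ω + ω) * h2

theorem mul_ne_of_sq_add_self_eq (hα : α ≠ 0) (hxα : x ≠ α) {s : F}
    (hs : s ^ 2 + s = α / (x + α)) : s * x ≠ α := by
  have hxα' : x + α ≠ 0 := mt CharTwo.add_eq_zero.mp hxα
  intro h
  rw [eq_div_iff hxα'] at hs
  -- substituting `s = α / x` turns `hs` into `α (x + α)² = α x²`, i.e. `α³ = 0`
  refine hα (pow_eq_zero_iff (n := 3) three_ne_zero |>.mp ?_)
  linear_combination x ^ 2 * hs - (x + α) * (s * x + α + x) * h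
    - α ^ 2 * x * CharTwo.two_eq_zero (R := F)

end InverseSums

section Fmod

variable {F : Type*} [Field F] [DecidableEq F] {α ω x : F}

theorem Fmod_zero : Fmod α 0 = α⁻¹ := if_pos rfl

theorem Fmod_self (hα : α ≠ 0) : Fmod α α = 0 := by simp [Fmod, hα]

theorem Fmod_of_ne (hx : x ≠ 0) (hxα : x ≠ α) : Fmod α x = x⁻¹ := by simp [Fmod, hx, hxα]

variable [CharP F 2]

theorem hasVanishingFlatThrough_Fmod_of_sq_add_self_eq (hα : α ≠ 0) (hx : x ≠ 0) (hxα : x ≠ α)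
    {t : F} (ht : t ^ 2 + t = α / (x + α)) : HasVanishingFlatThrough (Fmod α) x := by
  have h2 : (2 : F) = 0 := CharTwo.two_eq_zero
  have hxα' : x + α ≠ 0 := mt CharTwo.add_eq_zero.mp hxα
  have hrhs : α / (x + α) ≠ 0 := div_ne_zero hα hxα'
  have ht0 : t ≠ 0 := by rintro rfl; simp [eq_comm, hrhs] at ht
  have ht1 : t + 1 ≠ 0 := by
    intro h
    rw [CharTwo.add_eq_zero.mp h] at ht
    exact hrhs (by linear_combination -ht + h2)
  have htx : t * x ≠ α := mul_ne_of_sq_add_self_eq hα hxα ht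
  have ht1x : (t + 1) * x ≠ α :=
    mul_ne_of_sq_add_self_eq hα hxα (by linear_combination ht + (t + 1) * h2)
  have htx0 : t * x ≠ 0 := mul_ne_zero ht0 hx
  have hxtx : x + t * x = (t + 1) * x := by ring
  have htxx : t * x ≠ x := fun h =>
    ht1 (by simpa [hx] using (show (t + 1) * x = 0 by linear_combination h + x * h2))
  refine ⟨t * x, 0, htxx, hx.symm, htx0.symm, ?_⟩
  rw [add_zero, Fmod_of_ne hx hxα, Fmod_of_ne htx0 htx, Fmod_zero,
    Fmod_of_ne (hxtx ▸ mul_ne_zero ht1 hx) (hxtx ▸ ht1x)]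
  have hB := (inv_add_inv_add_inv_add_inv_add_eq_zero_iff hα hx htx0 htxx hxα).mpr
    (by rwa [mul_div_cancel_right₀ t hx])
  linear_combination hB

theorem hasVanishingFlatThrough_Fmod_of_mem_omega (hα : α ≠ 0) (hω : ω ^ 2 = ω + 1)
    (hx : x = 0 ∨ x = α ∨ x = α * ω ∨ x = α * ω ^ 2) : HasVanishingFlatThrough (Fmod α) x := by
  have h2 : (2 : F) = 0 := CharTwo.two_eq_zero
  have hω0 : ω ≠ 0 := by rintro rfl; simp at hω
  have hω1 : ω ≠ 1 := by rintro rfl; exact one_ne_zero (by linear_combination -hω : (1 : F) = 0)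
  have hω2 : ω ^ 2 ≠ 1 := by simpa [hω] using hω0
  have hαω : α * ω ≠ 0 := mul_ne_zero hα hω0
  have hαω2 : α * ω ^ 2 ≠ 0 := mul_ne_zero hα (pow_ne_zero 2 hω0)
  have hαωα : α * ω ≠ α := by simpa [hα] using hω1
  have hαω2α : α * ω ^ 2 ≠ α := by simpa [hα] using hω2
  have hflat : Fmod α 0 + Fmod α α + Fmod α (α * ω) + Fmod α (α * ω ^ 2) = 0 := by
    have h := (inv_add_inv_add_inv_add_eq_zero_iff hω hα hαω hαωα).mpr (Or.inl rfl)
    rw [show α * ω + α = α * ω ^ 2 by linear_combination -α * hω] at h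
    rw [Fmod_zero, Fmod_self hα, Fmod_of_ne hαω hαωα, Fmod_of_ne hαω2 hαω2α]
    linear_combination h
  rcases hx with h | h | h | h <;> rw [h]
  · refine ⟨α, α * ω, hα, hαω, hαωα, ?_⟩
    rw [show 0 + α + α * ω = α * ω ^ 2 by linear_combination -α * hω]
    exact hflat
  · refine ⟨0, α * ω, hα.symm, hαωα, hαω, ?_⟩
    rw [show α + 0 + α * ω = α * ω ^ 2 by linear_combination -α * hω]
    linear_combination hflat
  · refine ⟨0, α, hαω.symm, hαωα.symm, hα, ?_⟩
    rw [show α * ω + 0 + α = α * ω ^ 2 by linear_combination -α * hω]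
    linear_combination hflat
  · refine ⟨0, α, hαω2.symm, hαω2α.symm, hα, ?_⟩
    rw [show α * ω ^ 2 + 0 + α = α * ω by linear_combination α * hω + α * h2]
    linear_combination hflat

theorem exists_sq_add_self_eq_of_Fmod_flat_through_zero (hα : α ≠ 0) (hω : ω ^ 2 = ω + 1)
    (hx : x ≠ 0) (hxα : x ≠ α) (hxω : x ≠ α * ω) (hxω2 : x ≠ α * ω ^ 2) {u v : F}
    (hu : u ≠ 0) (hv : v ≠ 0) (hux : u ≠ x) (hsum : x + u + v = 0)
    (h : α⁻¹ + x⁻¹ + Fmod α u + Fmod α v = 0) : ∃ t, t ^ 2 + t = α / (x + α) := by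
  have h2 : (2 : F) = 0 := CharTwo.two_eq_zero
  have hxα' : x + α ≠ 0 := mt CharTwo.add_eq_zero.mp hxα
  have hxα'' : x + α ≠ α := by simpa using hx
  have hA : α⁻¹ + x⁻¹ + (x + α)⁻¹ ≠ 0 := fun h =>
    ((inv_add_inv_add_inv_add_eq_zero_iff hω hα hx hxα).mp h).elim hxω hxω2
  have hv' : v = x + u := by linear_combination hsum - (x + u) * h2
  by_cases huα : u = α
  · rw [hv', huα, Fmod_self hα, Fmod_of_ne hxα' hxα''] at h
    exact (hA (by linear_combination h)).elim
  by_cases hvα : v = α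
  · rw [show u = x + α by linear_combination hvα - hv' - x * h2, hvα, Fmod_self hα,
      Fmod_of_ne hxα' hxα''] at h
    exact (hA (by linear_combination h)).elim
  rw [Fmod_of_ne hu huα, Fmod_of_ne hv hvα, hv'] at h
  exact ⟨u / x, (inv_add_inv_add_inv_add_inv_add_eq_zero_iff hα hx hu hux hxα).mp h⟩

theorem exists_sq_add_self_eq_of_hasVanishingFlatThrough_Fmod (hα : α ≠ 0)
    (hω : ω ^ 2 = ω + 1) (hx : x ≠ 0) (hxα : x ≠ α) (hxω : x ≠ α * ω) (hxω2 : x ≠ α * ω ^ 2)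
    (hflat : HasVanishingFlatThrough (Fmod α) x) : ∃ t, t ^ 2 + t = α / (x + α) := by
  have h2 : (2 : F) = 0 := CharTwo.two_eq_zero
  obtain ⟨u, v, hux, hvx, hvu, h⟩ := hflat
  rw [Fmod_of_ne hx hxα] at h
  set w := x + u + v with hw
  have hwu : w ≠ u := fun h => hvx (by linear_combination h - hw - x * h2)
  have hwv : w ≠ v := fun h => hux (by linear_combination h - hw - x * h2)
  have zero_case : ∀ p q : F, p ≠ 0 → q ≠ 0 → p ≠ x → x + p + q = 0 →
      α⁻¹ + x⁻¹ + Fmod α p + Fmod α q = 0 → ∃ t, t ^ 2 + t = α / (x + α) :=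
    fun _ _ => exists_sq_add_self_eq_of_Fmod_flat_through_zero hα hω hx hxα hxω hxω2
  have alpha_case : ∀ p q : F, p ≠ 0 → q ≠ 0 → x + p + q = α →
      x⁻¹ + p⁻¹ + q⁻¹ = 0 → ∃ t, t ^ 2 + t = α / (x + α) :=
    fun _ _ hp hq => exists_sq_add_self_eq_of_inv_add_inv_add_inv_eq_zero hω hx hp hq hxα
  by_cases hu0 : u = 0
  · rw [hu0, Fmod_zero] at h
    exact zero_case v w (hu0 ▸ hvu) (hu0 ▸ hwu) hvx
      (by linear_combination -hw + hu0 + (x + v) * h2) (by linear_combination h)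
  by_cases hv0 : v = 0
  · rw [hv0, Fmod_zero] at h
    exact zero_case u w hu0 (hv0 ▸ hwv) hux
      (by linear_combination -hw + hv0 + (x + u) * h2) (by linear_combination h)
  by_cases hw0 : w = 0
  · rw [hw0, Fmod_zero] at h
    exact zero_case u v hu0 hv0 hux (by linear_combination -hw + hw0) (by linear_combination h)
  by_cases huα : u = α
  · rw [huα, Fmod_self hα, Fmod_of_ne hv0 (huα ▸ hvu), Fmod_of_ne hw0 (huα ▸ hwu)] at h
    exact alpha_case v w hv0 hw0 (by linear_combination -hw + huα + (x + v) * h2)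
      (by linear_combination h)
  by_cases hvα : v = α
  · rw [hvα, Fmod_self hα, Fmod_of_ne hu0 (hvα ▸ hvu.symm), Fmod_of_ne hw0 (hvα ▸ hwv)] at h
    exact alpha_case u w hu0 hw0 (by linear_combination -hw + hvα + (x + u) * h2)
      (by linear_combination h)
  by_cases hwα : w = α
  · rw [hwα, Fmod_self hα, Fmod_of_ne hu0 huα, Fmod_of_ne hv0 hvα] at h
    exact alpha_case u v hu0 hv0 (by linear_combination -hw + hwα) (by linear_combination h)
  rw [Fmod_of_ne hu0 huα, Fmod_of_ne hv0 hvα, Fmod_of_ne hw0 hwα, hw] at h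
  exact (inv_add_inv_add_inv_add_inv_ne_zero hx hu0 hv0 hux.symm hvu.symm hvx (hw ▸ hw0) h).elim

end Fmod

theorem hasVanishingFlatThrough_Fmod_iff {F : Type*} [Field F] [DecidableEq F] [CharP F 2]
    {α ω : F} (hα : α ≠ 0) (hω : ω ^ 2 = ω + 1) (x : F) :
    HasVanishingFlatThrough (Fmod α) x ↔
      x = 0 ∨ x = α ∨ x = α * ω ∨ x = α * ω ^ 2 ∨ ∃ t, t ^ 2 + t = α / (x + α) := by
  by_cases hx : x = 0 ∨ x = α ∨ x = α * ω ∨ x = α * ω ^ 2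
  · exact iff_of_true (hasVanishingFlatThrough_Fmod_of_mem_omega hα hω hx) (by tauto)
  obtain ⟨hx0, hxα, hxω, hxω2⟩ : x ≠ 0 ∧ x ≠ α ∧ x ≠ α * ω ∧ x ≠ α * ω ^ 2 := by
    simpa only [not_or] using hx
  simp only [hx0, hxα, hxω, hxω2, false_or]
  exact ⟨exists_sq_add_self_eq_of_hasVanishingFlatThrough_Fmod hα hω hx0 hxα hxω hxω2,
    fun ⟨_, ht⟩ => hasVanishingFlatThrough_Fmod_of_sq_add_self_eq hα hx0 hxα ht⟩

variable {F : Type*} [Field F] [Fintype F] [DecidableEq F]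

theorem stmt_11_general (n : ℕ)
    [CharP F 2] (hcard : Fintype.card F = 2 ^ n)
    (α : F) (hα : α ≠ 0) (ω : F) (hω : ω ^ 2 = ω + 1) :
    ∀ x : F,
      ((∀ a : F, a ≠ 0 → nabla (Fmod α) a x = 2) ↔
        (x ≠ 0 ∧ x ≠ α ∧ x ≠ α * ω ∧ x ≠ α * ω ^ 2 ∧ Tr n (α / (x + α)) = 1)) := by
  intro x
  have hTr : Tr n (α / (x + α)) ≠ 0 ↔ Tr n (α / (x + α)) = 1 :=
    ⟨(Tr_eq_zero_or_one hcard _).resolve_left, fun h => h ▸ one_ne_zero⟩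
  rw [forall_nabla_eq_two_iff, hasVanishingFlatThrough_Fmod_iff hα hω,
    exists_sq_add_self_eq_iff_Tr_eq_zero hcard]
  simp only [not_or, hTr]

/-- the column spectrum of `F_{0,α}` for even `n ≥ 4`. -/
theorem stmt_11 (n : ℕ) (hn : 4 ≤ n) (heven : Even n)
    [CharP F 2] (hcard : Fintype.card F = 2 ^ n)
    (α : F) (hα : α ≠ 0) (ω : F) (hω : ω ^ 2 = ω + 1) :
    ∀ x : F,
      ((∀ a : F, a ≠ 0 → nabla (Fmod α) a x = 2) ↔
        (x ≠ 0 ∧ x ≠ α ∧ x ≠ α * ω ∧ x ≠ α * ω ^ 2 ∧ Tr n (α / (x + α)) = 1)) :=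
  stmt_11_general n hcard α hα ω hω

end APNPaper
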